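/- arXiv:1412.1110 — 2 statements merged into one kernel-verified Lean document; each statement's English description precedes it below -/
import Mathlib

section
/- For all integers m, n, r ≥ 0, in ℤ[q]: B_q^{(r)}(m+n) = Σ_{i=0}^{n} Σ_{j=0}^{m} q^{i(j+r)} · ([j+r]_q)^{n-i} · C(n,i) · S_q^{(r)}(m,j) · B_q(i), where C(n,i) is the ordinary binomial coefficient. -/
open Finset Polynomial

/-- The q-integer [n]_q = 1 + q + ⋯ + q^{n-1} in ℤ[q]. -/
noncomputable def qint (n : ℕ) : Polynomial ℤ := ∑ i ∈ range n, X ^ i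

/-- q-Stirling numbers of the second kind (natural-number index version). -/
noncomputable def qStirling2Nat : ℕ → ℕ → Polynomial ℤ
  | 0, 0 => 1
  | 0, _ + 1 => 0
  | _ + 1, 0 => 0
  | n + 1, k + 1 => X ^ k * qStirling2Nat n k + qint (k + 1) * qStirling2Nat n (k + 1)

/-- q-Stirling numbers of the second kind, vanishing for negative second index. -/
noncomputable def qStirling2 (n : ℕ) (k : ℤ) : Polynomial ℤ :=
  if 0 ≤ k then qStirling2Nat n k.toNat else 0

/-- The q-Bell numbers. -/
noncomputable def qBell (n : ℕ) : Polynomial ℤ :=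
  ∑ k ∈ range (n + 1), qStirling2 n (k : ℤ)

/-- q-r-Stirling numbers of the second kind. -/
noncomputable def qrStirling2 (r n : ℕ) (k : ℤ) : Polynomial ℤ :=
  ∑ i ∈ range (n + 1), X ^ (i * r) * (qint r) ^ (n - i) * (n.choose i : Polynomial ℤ) *
    qStirling2 i k

/-- The q-r-Bell numbers. -/
noncomputable def qrBell (r n : ℕ) : Polynomial ℤ :=
  ∑ k ∈ range (n + 1), qrStirling2 r n (k : ℤ)

/-! The q-r-Stirling numbers obey the triangular recurrence
`S^{(r)}(n+1,k) = q^{k+r-1} S^{(r)}(n,k-1) + [k+r]_q S^{(r)}(n,k)`, which follows from Pascal's rule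
and `[k+r]_q = [r]_q + q^r [k]_q`. Its coefficients only depend on `k + r`, so they are unchanged
under `k ↦ k - j`, `r ↦ r + j`; induction on `n` then gives the convolution
`S^{(r)}(m+n,l) = ∑_j S^{(r)}(m,j) S^{(j+r)}(n,l-j)`. Summing over `l` yields
`B^{(r)}(m+n) = ∑_j S^{(r)}(m,j) B^{(j+r)}(n)`, and expanding each `B^{(j+r)}(n)` through the
definition of the q-r-Stirling numbers gives the identity. -/

@[simp]
lemma qint_zero : qint 0 = 0 :=
  sum_range_zero _

lemma qint_add (a b : ℕ) : qint (a + b) = qint a + X ^ a * qint b := by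
  simp [qint, sum_range_add, mul_sum, pow_add]

lemma qStirling2Nat_eq_zero_of_lt : ∀ {n k : ℕ}, n < k → qStirling2Nat n k = 0
  | 0, _ + 1, _ => rfl
  | n + 1, k + 1, h => by
    rw [qStirling2Nat, qStirling2Nat_eq_zero_of_lt (by omega),
      qStirling2Nat_eq_zero_of_lt (by omega), mul_zero, mul_zero, add_zero]

lemma qStirling2_natCast (n k : ℕ) : qStirling2 n k = qStirling2Nat n k := by
  rw [qStirling2, if_pos k.cast_nonneg, Int.toNat_natCast]

lemma qStirling2_of_neg (n : ℕ) {k : ℤ} (hk : k < 0) : qStirling2 n k = 0 :=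
  if_neg (not_le.mpr hk)

lemma qStirling2_of_lt {n : ℕ} {k : ℤ} (hk : (n : ℤ) < k) : qStirling2 n k = 0 := by
  rw [qStirling2, if_pos (by omega), qStirling2Nat_eq_zero_of_lt (by omega)]

lemma qStirling2_zero_left (k : ℤ) : qStirling2 0 k = if k = 0 then 1 else 0 := by
  rcases k with (_ | k) | k <;> rfl

-- For `k ≤ 0` the truncation by `toNat` is harmless: the terms it affects vanish.
lemma qStirling2_succ (n : ℕ) (k : ℤ) :
    qStirling2 (n + 1) k =
      X ^ (k - 1).toNat * qStirling2 n (k - 1) + qint k.toNat * qStirling2 n k := by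
  rcases lt_trichotomy k 0 with hk | rfl | hk
  · rw [qStirling2_of_neg _ hk, qStirling2_of_neg _ hk, qStirling2_of_neg _ (by omega)]
    ring
  · rw [Int.toNat_zero, qint_zero, zero_mul, qStirling2_of_neg n (by norm_num), mul_zero, add_zero]
    rfl
  · obtain ⟨t, rfl⟩ : ∃ t : ℕ, k = t + 1 := ⟨(k - 1).toNat, by omega⟩
    rw [add_sub_cancel_right, ← Nat.cast_succ, Int.toNat_natCast, Int.toNat_natCast,
      qStirling2_natCast, qStirling2_natCast, qStirling2_natCast, qStirling2Nat]

lemma qStirling2_succ_shift (r i : ℕ) (k : ℤ) :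
    X ^ r * qStirling2 (i + 1) k + qint r * qStirling2 i k =
      X ^ (k + r - 1).toNat * qStirling2 i (k - 1) + qint (k + r).toNat * qStirling2 i k := by
  rw [qStirling2_succ]
  rcases lt_trichotomy k 0 with hk | rfl | hk
  · rw [qStirling2_of_neg _ hk, qStirling2_of_neg _ (by omega)]
    ring
  · rw [qStirling2_of_neg i (by norm_num), zero_add, Int.toNat_natCast, Int.toNat_zero, qint_zero]
    ring
  · obtain ⟨t, rfl⟩ : ∃ t : ℕ, k = t + 1 := ⟨(k - 1).toNat, by omega⟩
    rw [show ((t : ℤ) + 1 + r - 1).toNat = r + t by omega,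
      show ((t : ℤ) + 1 - 1).toNat = t by omega,
      show ((t : ℤ) + 1 + r).toNat = r + (t + 1) by omega,
      show ((t : ℤ) + 1).toNat = t + 1 by omega, qint_add r (t + 1)]
    ring

lemma qrStirling2_eq_sum_choose_mul (r n : ℕ) (k : ℤ) :
    qrStirling2 r n k =
      ∑ i ∈ range (n + 1),
        (n.choose i : ℤ[X]) * (X ^ (i * r) * qint r ^ (n - i) * qStirling2 i k) :=
  sum_congr rfl fun _ _ => by ring

lemma qrStirling2_succ (r n : ℕ) (k : ℤ) :
    qrStirling2 r (n + 1) k =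
      X ^ (k + r - 1).toNat * qrStirling2 r n (k - 1) + qint (k + r).toNat * qrStirling2 r n k := by
  rw [qrStirling2_eq_sum_choose_mul,
    sum_choose_succ_mul (fun i j => X ^ (i * r) * qint r ^ j * qStirling2 i k), ← sum_add_distrib,
    qrStirling2, qrStirling2, mul_sum, mul_sum, ← sum_add_distrib]
  refine sum_congr rfl fun i hi => ?_
  rw [Nat.sub_add_comm (mem_range_succ_iff.mp hi)]
  linear_combination (qint r ^ (n - i) * X ^ (i * r) * n.choose i) * qStirling2_succ_shift r i k

lemma qrStirling2_of_neg (r n : ℕ) {k : ℤ} (hk : k < 0) : qrStirling2 r n k = 0 :=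
  sum_eq_zero fun i _ => by rw [qStirling2_of_neg i hk, mul_zero]

lemma qrStirling2_of_lt (r : ℕ) {n : ℕ} {k : ℤ} (hk : (n : ℤ) < k) :
    qrStirling2 r n k = 0 :=
  sum_eq_zero fun i hi => by
    rw [qStirling2_of_lt (by have := mem_range_succ_iff.mp hi; omega), mul_zero]

lemma qrStirling2_zero_left (r : ℕ) (k : ℤ) : qrStirling2 r 0 k = if k = 0 then 1 else 0 := by
  simp [qrStirling2, qStirling2_zero_left]

lemma qrStirling2_add (r m n : ℕ) (l : ℤ) :
    qrStirling2 r (m + n) l =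
      ∑ j ∈ range (m + 1), qrStirling2 r m j * qrStirling2 (j + r) n (l - j) := by
  induction n generalizing l with
  | zero =>
    simp only [add_zero, qrStirling2_zero_left, mul_ite, mul_one, mul_zero, sub_eq_zero]
    rcases lt_or_ge l 0 with hl | hl
    · rw [qrStirling2_of_neg r m hl]
      exact (sum_eq_zero fun j _ => if_neg (by omega)).symm
    · lift l to ℕ using hl with t
      simp only [Nat.cast_inj, sum_ite_eq, mem_range]
      split_ifs with ht
      · rfl
      · exact qrStirling2_of_lt r (by omega)
  | succ n ih =>
    rw [← add_assoc, qrStirling2_succ, ih, ih, mul_sum, mul_sum, ← sum_add_distrib]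
    refine sum_congr rfl fun j _ => ?_
    rw [qrStirling2_succ, show l - j + ↑(j + r) - 1 = l + r - 1 by push_cast; ring,
      show l - j + ↑(j + r) = l + r by push_cast; ring, sub_right_comm]
    ring

lemma sum_range_comp_sub_natCast {M : Type*} [AddCommMonoid M] {f : ℤ → M} {j N L : ℕ}
    (hneg : ∀ k < 0, f k = 0) (hlarge : ∀ k : ℕ, N ≤ k → f k = 0) (hL : j + N ≤ L) :
    ∑ l ∈ range L, f (l - j) = ∑ k ∈ range N, f k := by
  obtain ⟨t, rfl⟩ := Nat.exists_eq_add_of_le (le_of_add_le_left hL)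
  rw [sum_range_add, sum_eq_zero fun l hl => hneg _ (by have := mem_range.mp hl; omega), zero_add]
  simp only [Nat.cast_add, add_sub_cancel_left]
  exact eventually_constant_sum hlarge (by omega)

lemma qBell_eq_sum_range {i N : ℕ} (h : i ≤ N) :
    qBell i = ∑ k ∈ range (N + 1), qStirling2 i k :=
  (eventually_constant_sum (fun k hk => qStirling2_of_lt (by omega)) (by omega)).symm

lemma qrBell_eq_sum_qBell (s n : ℕ) :
    qrBell s n =
      ∑ i ∈ range (n + 1),
        X ^ (i * s) * qint s ^ (n - i) * (n.choose i : ℤ[X]) * qBell i := by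
  simp only [qrBell, qrStirling2, sum_comm (s := range (n + 1)), ← mul_sum]
  exact sum_congr rfl fun i hi => by rw [qBell_eq_sum_range (mem_range_succ_iff.mp hi)]

lemma qrBell_add_eq_sum (r m n : ℕ) :
    qrBell r (m + n) = ∑ j ∈ range (m + 1), qrStirling2 r m j * qrBell (j + r) n := by
  simp only [qrBell, qrStirling2_add, sum_comm (s := range (m + n + 1)), ← mul_sum]
  refine sum_congr rfl fun j hj => ?_
  have hj : j ≤ m := mem_range_succ_iff.mp hj
  rw [sum_range_comp_sub_natCast (N := n + 1) (fun k hk => qrStirling2_of_neg _ _ hk)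
    (fun k hk => qrStirling2_of_lt _ (by omega)) (by omega)]

theorem qrBell_add (m n r : ℕ) :
    qrBell r (m + n) =
      ∑ i ∈ range (n + 1), ∑ j ∈ range (m + 1),
        X ^ (i * (j + r)) * (qint (j + r)) ^ (n - i) * (n.choose i : Polynomial ℤ) *
          qrStirling2 r m (j : ℤ) * qBell i := by
  rw [qrBell_add_eq_sum]
  simp only [qrBell_eq_sum_qBell, mul_sum]
  rw [sum_comm]
  exact sum_congr rfl fun j _ => sum_congr rfl fun i _ => by ring
end

section
/- For all integers m, n, k ≥ 1: C(m+n-k, k) = Σ_{i=0}^{n} Σ_{j=0}^{m} β_{i,j} · (-1)^{i(j+1)} · C(n,i) · C(m-⌈j/2⌉, m-j) · C(i-k+⌈j/2⌉-1, i-2k+j), where β_{i,j} = χ(j is even) + χ(j is odd and i = n). -/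
/-!
Split the sum over `j` by parity. For even `j = 2t` the sum over `i` is the alternating binomial
transform `∑ᵢ (-1)^i C(n,i) C(i-d-1, i-2d) = C(n-d, d)` with `d = k - t`; both sides satisfy
`F(n+2, d) = F(n+1, d) + F(n, d-1)` by Pascal's rule. For odd `j` only `i = n` survives. The two
resulting convolutions satisfy `O_{m+1}(n, k) = E_m(n-1, k-1)` and
`E_{m+1}(n, k) = E_m(n, k) + O_m(n+1, k)`, so `E_m + O_m` obeys Pascal's rule in `m` and equals
`C(m+n-k, k)`.
-/

open Finset

/-- Binomial coefficient with integer arguments: C(a,0) = 1 for every integer a, and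
C(a,b) = 0 whenever b < 0 or 0 ≤ b ≤ a fails (for b > 0). -/
def C (a b : ℤ) : ℤ :=
  if b = 0 then 1 else if 0 ≤ b ∧ b ≤ a then (a.toNat.choose b.toNat : ℤ) else 0

lemma C_zero_right (a : ℤ) : C a 0 = 1 := by simp [C]

lemma C_of_neg {a b : ℤ} (h : b < 0) : C a b = 0 := by simp [C, h.ne, not_le.mpr h]

lemma C_of_lt {a b : ℤ} (hb : b ≠ 0) (h : a < b) : C a b = 0 := by simp [C, hb, not_le.mpr h]

lemma C_eq_choose {a b : ℤ} (hb : 0 ≤ b) : C a b = a.toNat.choose b.toNat := by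
  rcases hb.eq_or_lt with rfl | hb
  · simp [C_zero_right]
  · rcases le_or_gt b a with hba | hab
    · simp [C, hb.ne', hb.le, hba]
    · rw [C_of_lt hb.ne' hab, Nat.choose_eq_zero_of_lt (by omega), Nat.cast_zero]

/-- Pascal's rule. It fails for `b = 0`, `a < 0`, where `C a 0 = 1` but `C (a + 1) 1 = 0`. -/
lemma C_add_one_add_one {a b : ℤ} (h : b = 0 → 0 ≤ a) :
    C (a + 1) (b + 1) = C a b + C a (b + 1) := by
  rcases lt_or_ge b 0 with hb | hb
  · rcases (show b = -1 ∨ b < -1 by omega) with rfl | hb'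
    · simp [C_zero_right, C_of_neg]
    · rw [C_of_neg (by omega), C_of_neg hb, C_of_neg (by omega), add_zero]
  rcases lt_or_ge a 0 with ha | ha
  · rw [C_of_lt (by omega) (by omega), C_of_lt (by omega) (by omega),
      C_of_lt (by omega) (by omega), add_zero]
  rw [C_eq_choose (by omega), C_eq_choose hb, C_eq_choose (by omega),
    show (a + 1).toNat = a.toNat + 1 by omega, show (b + 1).toNat = b.toNat + 1 by omega,
    Nat.choose_succ_succ, Nat.cast_add]

lemma C_symm {a b c : ℤ} (h : b + c = a) (hb : b = 0 → 0 ≤ a) (hc : c = 0 → 0 ≤ a) :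
    C a b = C a c := by
  rcases lt_or_ge b 0 with hb0 | hb0
  · rw [C_of_neg hb0, C_of_lt (by omega) (by omega)]
  rcases lt_or_ge c 0 with hc0 | hc0
  · rw [C_of_neg hc0, C_of_lt (by omega) (by omega)]
  rw [C_eq_choose hb0, C_eq_choose hc0,
    Nat.choose_symm_of_eq_add (show a.toNat = b.toNat + c.toNat by omega)]

section AltChooseSum

variable {R : Type*} [CommRing R]

/-- `(-1)^n` times the `n`-th forward difference of `f` at `0`. -/
def altChooseSum (n : ℕ) (f : ℕ → R) : R :=
  ∑ i ∈ range (n + 1), (-1) ^ i * n.choose i * f i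

lemma altChooseSum_zero (f : ℕ → R) : altChooseSum 0 f = f 0 := by
  simp [altChooseSum]

lemma altChooseSum_sub (n : ℕ) (f g : ℕ → R) :
    altChooseSum n (fun i => f i - g i) = altChooseSum n f - altChooseSum n g := by
  simp only [altChooseSum, mul_sub, sum_sub_distrib]

lemma altChooseSum_succ (n : ℕ) (f : ℕ → R) :
    altChooseSum (n + 1) f = altChooseSum n f - altChooseSum n (fun i => f (i + 1)) := by
  have hshift : altChooseSum n f =
      f 0 - ∑ i ∈ range (n + 1), (-1) ^ i * n.choose (i + 1) * f (i + 1) := by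
    rw [altChooseSum, sum_range_succ', sum_range_succ, Nat.choose_succ_self]
    simp [pow_succ, sub_eq_neg_add]
  rw [hshift, altChooseSum, altChooseSum, sum_range_succ']
  simp only [pow_succ, mul_neg, mul_one, Nat.choose_succ_succ, Nat.cast_add, mul_add, neg_mul,
    add_mul, sum_add_distrib, sum_neg_distrib, pow_zero, Nat.choose_zero_right, Nat.cast_one,
    one_mul]
  ring

lemma altChooseSum_add_two (n : ℕ) (f : ℕ → R) :
    altChooseSum (n + 2) f =
      altChooseSum (n + 1) f + altChooseSum n (fun i => f (i + 2) - f (i + 1)) := by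
  rw [altChooseSum_succ (n + 1), altChooseSum_succ n (fun i => f (i + 1)), altChooseSum_sub]
  ring

end AltChooseSum

lemma altChooseSum_C_diagonal (n : ℕ) (d : ℤ) :
    altChooseSum n (fun i => C (i - d - 1) (i - 2 * d)) = C (n - d) d := by
  induction n using Nat.twoStepInduction generalizing d with
  | zero =>
    rw [altChooseSum_zero]
    rcases lt_trichotomy d 0 with hd | rfl | hd <;>
      simp (disch := omega) [C_zero_right, C_of_neg, C_of_lt]
  | one =>
    rw [altChooseSum_succ, altChooseSum_zero, altChooseSum_zero]
    rcases lt_trichotomy d 0 with hd | rfl | hd <;>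
      simp (disch := omega) [C_zero_right, C_of_neg, C_of_lt]
  | more n ih0 ih1 =>
    have hstep (i : ℕ) : C ((i + 2 : ℕ) - d - 1) ((i + 2 : ℕ) - 2 * d) -
        C ((i + 1 : ℕ) - d - 1) ((i + 1 : ℕ) - 2 * d) = C (i - (d - 1) - 1) (i - 2 * (d - 1)) := by
      rw [sub_eq_iff_eq_add']
      push_cast
      convert C_add_one_add_one (a := i - d) (b := i - 2 * d + 1) (by omega) using 3 <;> ring
    simp only [altChooseSum_add_two, hstep, ih1, ih0]
    rw [add_comm]
    push_cast
    convert (C_add_one_add_one (a := n + 1 - d) (b := d - 1) (by omega)).symm using 3 <;> ring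

/-- `evenPart` and `oddPart` (the `E_m` and `O_m` above) are the contributions of even and of odd
`j` to the double sum, once the sum over `i` is done. -/
def evenPart (m : ℕ) (n k : ℤ) : ℤ :=
  ∑ t ∈ range (m + 1), C (m - t) (m - 2 * t) * C (n - k + t) (k - t)

def oddPart (m : ℕ) (n k : ℤ) : ℤ :=
  ∑ t ∈ range (m + 1), C (m - 1 - t) (m - 1 - 2 * t) * C (n - k + t) (k - 1 - t)

lemma evenPart_zero (n k : ℤ) : evenPart 0 n k = C (n - k) k := by
  simp [evenPart, C_zero_right]

lemma oddPart_zero (n k : ℤ) : oddPart 0 n k = 0 := by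
  simp [oddPart, C_of_neg]

lemma oddPart_succ (m : ℕ) (n k : ℤ) : oddPart (m + 1) n k = evenPart m (n - 1) (k - 1) := by
  rw [oddPart, sum_range_succ, C_of_neg (a := (m + 1 : ℕ) - 1 - (m + 1 : ℕ)) (by omega), zero_mul,
    add_zero]
  refine sum_congr rfl fun t _ => ?_
  push_cast
  ring_nf

lemma evenPart_succ (m : ℕ) (n k : ℤ) :
    evenPart (m + 1) n k = evenPart m n k + oddPart m (n + 1) k := by
  have hpascal (t : ℕ) : C ((m + 1 : ℕ) - t) ((m + 1 : ℕ) - 2 * t) =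
      C (m - t) (m - 2 * t) + C (m - t) (m - 2 * t + 1) := by
    push_cast
    convert C_add_one_add_one (a := m - t) (b := m - 2 * t) (by omega) using 2 <;> ring
  have heven : ∑ t ∈ range (m + 1 + 1), C (m - t) (m - 2 * t) * C (n - k + t) (k - t) =
      evenPart m n k := by
    rw [sum_range_succ, C_of_neg (a := m - (m + 1 : ℕ)) (by omega), zero_mul, add_zero, evenPart]
  have hodd : ∑ t ∈ range (m + 1 + 1), C (m - t) (m - 2 * t + 1) * C (n - k + t) (k - t) =
      oddPart m (n + 1) k := by
    rw [sum_range_succ', C_of_lt (a := m - (0 : ℕ)) (by omega) (by omega), zero_mul, add_zero]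
    refine sum_congr rfl fun t _ => ?_
    push_cast
    ring_nf
  simp only [evenPart, hpascal, add_mul, sum_add_distrib, heven, hodd]

lemma evenPart_add_oddPart (m : ℕ) {n : ℤ} (hn : 1 ≤ n) (k : ℤ) :
    evenPart m n k + oddPart m n k = C (m + n - k) k := by
  induction m using Nat.twoStepInduction generalizing k with
  | zero => simp [evenPart_zero, oddPart_zero]
  | one =>
    rw [evenPart_succ, oddPart_succ, evenPart_zero, evenPart_zero, oddPart_zero, add_zero, add_comm]
    convert (C_add_one_add_one (a := n - k) (b := k - 1) (by omega)).symm using 3 <;>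
      push_cast <;> ring
  | more m ih0 ih1 =>
    rw [evenPart_succ (m + 1), oddPart_succ m (n + 1), oddPart_succ (m + 1), evenPart_succ m (n - 1),
      ← oddPart_succ m n, add_sub_cancel_right, sub_add_cancel, add_add_add_comm, ih1, ih0,
      add_comm]
    convert (C_add_one_add_one (a := m + 1 + n - k) (b := k - 1) (by omega)).symm using 3 <;>
      push_cast <;> ring

lemma sum_range_two_mul {M : Type*} [AddCommMonoid M] (f : ℕ → M) (N : ℕ) :
    ∑ j ∈ range (2 * N), f j = ∑ t ∈ range N, f (2 * t) + ∑ t ∈ range N, f (2 * t + 1) := by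
  induction N with
  | zero => simp
  | succ N ih =>
    rw [mul_add_one, sum_range_succ, sum_range_succ, ih, sum_range_succ, sum_range_succ]
    abel

lemma sum_range_succ_eq_sum_even_add_sum_odd {M : Type*} [AddCommMonoid M] (f : ℕ → M) (m : ℕ)
    (hf : ∀ j, m < j → f j = 0) :
    ∑ j ∈ range (m + 1), f j =
      ∑ t ∈ range (m + 1), f (2 * t) + ∑ t ∈ range (m + 1), f (2 * t + 1) := by
  rw [← sum_range_two_mul]
  exact sum_subset (range_subset_range.mpr (by omega)) fun j _ hj => hf j (by simpa using hj)

def binomIdentityTerm (m n k i j : ℕ) : ℤ :=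
  ((if Even j then 1 else 0) + (if Odd j ∧ i = n then 1 else 0) : ℤ) *
    (-1) ^ (i * (j + 1)) * (n.choose i : ℤ) *
    C ((m : ℤ) - ((j : ℤ) + 1) / 2) ((m : ℤ) - j) *
    C ((i : ℤ) - k + ((j : ℤ) + 1) / 2 - 1) ((i : ℤ) - 2 * k + j)

section BinomIdentityTerm

variable (m n k : ℕ)

lemma binomIdentityTerm_of_lt {i j : ℕ} (hj : m < j) : binomIdentityTerm m n k i j = 0 := by
  rw [binomIdentityTerm, C_of_neg (by omega), mul_zero, zero_mul]

lemma sum_binomIdentityTerm_two_mul (t : ℕ) :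
    ∑ i ∈ range (n + 1), binomIdentityTerm m n k i (2 * t) =
      C (m - t) (m - 2 * t) * C (n - k + t) (k - t) := by
  have hterm (i : ℕ) : binomIdentityTerm m n k i (2 * t) = C (m - t) (m - 2 * t) *
      ((-1) ^ i * n.choose i * C (i - (k - t : ℤ) - 1) (i - 2 * (k - t : ℤ))) := by
    have hsign : (-1 : ℤ) ^ (i * (2 * t + 1)) = (-1) ^ i := by
      rw [show i * (2 * t + 1) = 2 * (i * t) + i by ring, pow_add, pow_mul, neg_one_sq, one_pow,
        one_mul]
    rw [binomIdentityTerm, if_pos (even_two_mul t),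
      if_neg fun h => Nat.not_even_iff_odd.mpr h.1 (even_two_mul t), hsign,
      show (((2 * t : ℕ) : ℤ) + 1) / 2 = t by omega]
    push_cast
    ring_nf
  rw [sum_congr rfl fun i _ => hterm i, ← mul_sum, ← altChooseSum, altChooseSum_C_diagonal]
  ring_nf

lemma sum_binomIdentityTerm_two_mul_add_one (hn : 1 ≤ n) (t : ℕ) :
    ∑ i ∈ range (n + 1), binomIdentityTerm m n k i (2 * t + 1) =
      C (m - 1 - t) (m - 1 - 2 * t) * C (n - k + t) (k - 1 - t) := by
  rw [sum_eq_single_of_mem n (self_mem_range_succ n) fun i _ hi => by simp [binomIdentityTerm, hi]]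
  have hsign : (-1 : ℤ) ^ (n * (2 * t + 1 + 1)) = 1 := by
    rw [show 2 * t + 1 + 1 = 2 * (t + 1) by ring, mul_left_comm, pow_mul, neg_one_sq, one_pow]
  rw [binomIdentityTerm, if_neg (Nat.not_even_iff_odd.mpr (odd_two_mul_add_one t)),
    if_pos ⟨odd_two_mul_add_one t, rfl⟩, hsign, Nat.choose_self,
    show (((2 * t + 1 : ℕ) : ℤ) + 1) / 2 = t + 1 by omega,
    C_symm (a := n - k + (t + 1) - 1) (b := n - 2 * k + (2 * t + 1 : ℕ)) (c := k - 1 - t) (by push_cast; ring)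
      (by omega) (by omega)]
  push_cast
  ring_nf

end BinomIdentityTerm

theorem binom_identity_3_general (m n k : ℕ) (hn : 1 ≤ n) :
    C ((m : ℤ) + n - k) (k : ℤ) =
      ∑ i ∈ range (n + 1), ∑ j ∈ range (m + 1),
        ((if Even j then 1 else 0) + (if Odd j ∧ i = n then 1 else 0) : ℤ) *
          (-1) ^ (i * (j + 1)) * (n.choose i : ℤ) *
          C ((m : ℤ) - ((j : ℤ) + 1) / 2) ((m : ℤ) - j) *
          C ((i : ℤ) - k + ((j : ℤ) + 1) / 2 - 1) ((i : ℤ) - 2 * k + j) := by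
  change _ = ∑ i ∈ range (n + 1), ∑ j ∈ range (m + 1), binomIdentityTerm m n k i j
  rw [sum_comm, sum_range_succ_eq_sum_even_add_sum_odd _ m
    fun j hj => sum_eq_zero fun i _ => binomIdentityTerm_of_lt m n k hj]
  simp only [sum_binomIdentityTerm_two_mul, sum_binomIdentityTerm_two_mul_add_one m n k hn]
  exact (evenPart_add_oddPart m (by exact_mod_cast hn) k).symm

theorem binom_identity_3 (m n k : ℕ) (hm : 1 ≤ m) (hn : 1 ≤ n) (hk : 1 ≤ k) :
    C ((m : ℤ) + n - k) (k : ℤ) =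
      ∑ i ∈ range (n + 1), ∑ j ∈ range (m + 1),
        ((if Even j then 1 else 0) + (if Odd j ∧ i = n then 1 else 0) : ℤ) *
          (-1) ^ (i * (j + 1)) * (n.choose i : ℤ) *
          C ((m : ℤ) - ((j : ℤ) + 1) / 2) ((m : ℤ) - j) *
          C ((i : ℤ) - k + ((j : ℤ) + 1) / 2 - 1) ((i : ℤ) - 2 * k + j) :=
  binom_identity_3_general m n k hn
end
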